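/- arXiv:2304.06932 — 4 statements merged into one kernel-verified Lean document; each statement's English description precedes it below -/
import Mathlib

section
/- Let Q be a pointed submonoid of an abelian group Γ, and let V, W ⊆ Γ be subsets which are both finitely bounded below and downward finite with respect to ≤_Q. Then for every u ∈ Γ, the following three sets are finite: U = { (g,h) ∈ V × W | g + h ≤_Q u }, U₁ = { g ∈ V | ∃ h ∈ W, g + h ≤_Q u }, and U₂ = { h ∈ W | ∃ g ∈ V, g + h ≤_Q u }. -/
open scoped DirectSum

section Defs
variable {Γ : Type*} [AddCommGroup Γ]

/-- The relation `g ≤_Q h`: there exists `q ∈ Q` with `g + q = h`. -/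
def leQ (Q : Set Γ) (g h : Γ) : Prop := ∃ q ∈ Q, g + q = h

/-- `U` is downward finite w.r.t. `≤_Q`. -/
def DownwardFinite (Q U : Set Γ) : Prop := ∀ g : Γ, {u ∈ U | leQ Q u g}.Finite

/-- `U` is finitely bounded below w.r.t. `≤_Q`. -/
def FinBddBelow (Q U : Set Γ) : Prop := ∃ T : Finset Γ, ∀ u ∈ U, ∃ t ∈ T, leQ Q t u

/-- A submonoid (as a set) is pointed. -/
def IsPointed (Q : Set Γ) : Prop := ∀ p ∈ Q, ∀ q ∈ Q, p + q = 0 → p = 0 ∧ q = 0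

/-- A family of elements of `Γ` is a BDF family. -/
def BDFFamily (Q : Set Γ) {I : Type*} (g : I → Γ) : Prop :=
  DownwardFinite Q (Set.range g) ∧ FinBddBelow Q (Set.range g) ∧
    ∀ γ : Γ, {i : I | g i = γ}.Finite

end Defs

/-- The Γ-support of a graded object. -/
def suppOf {Γ k V : Type*} [Semiring k] [AddCommMonoid V] [Module k V]
    (ℱ : Γ → Submodule k V) : Set Γ := {g | ℱ g ≠ ⊥}

/-- if `V, W ⊆ Γ` are finitely bounded below and downward finite with respect
to a pointed submonoid `Q`, then for every `u ∈ Γ` the sets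
`U = {(g,h) ∈ V × W | g + h ≤_Q u}`, `U₁ = {g ∈ V | ∃ h ∈ W, g + h ≤_Q u}` and
`U₂ = {h ∈ W | ∃ g ∈ V, g + h ≤_Q u}` are finite. -/
theorem finite_sum_property
    {Γ : Type*} [AddCommGroup Γ] (Q : AddSubmonoid Γ)
    (hpointed : IsPointed (Q : Set Γ))
    (V W : Set Γ)
    (hVb : FinBddBelow (Q : Set Γ) V) (hVd : DownwardFinite (Q : Set Γ) V)
    (hWb : FinBddBelow (Q : Set Γ) W) (hWd : DownwardFinite (Q : Set Γ) W)
    (u : Γ) :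
    {p : Γ × Γ | p.1 ∈ V ∧ p.2 ∈ W ∧ leQ (Q : Set Γ) (p.1 + p.2) u}.Finite ∧
      {g ∈ V | ∃ h ∈ W, leQ (Q : Set Γ) (g + h) u}.Finite ∧
      {h ∈ W | ∃ g ∈ V, leQ (Q : Set Γ) (g + h) u}.Finite := by
  obtain ⟨TV, hTV⟩ := hVb
  obtain ⟨TW, hTW⟩ := hWb
  -- If g + h ≤ u and t ≤ h then g ≤ u - t
  have step : ∀ g h t : Γ, leQ (Q : Set Γ) (g + h) u → leQ (Q : Set Γ) t h →
      leQ (Q : Set Γ) g (u - t) := by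
    rintro g h t ⟨q, hq, hsum⟩ ⟨q', hq', hsum'⟩
    refine ⟨q' + q, Q.add_mem hq' hq, ?_⟩
    rw [eq_sub_iff_add_eq, ← hsum, ← hsum']; abel
  have h1 : {g ∈ V | ∃ h ∈ W, leQ (Q : Set Γ) (g + h) u}.Finite := by
    refine Set.Finite.subset
      (Set.Finite.biUnion TW.finite_toSet fun t _ => hVd (u - t)) ?_
    rintro g ⟨hgV, h, hhW, hle⟩
    obtain ⟨t, htT, hth⟩ := hTW h hhW
    exact Set.mem_biUnion htT ⟨hgV, step g h t hle hth⟩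
  have h2 : {h ∈ W | ∃ g ∈ V, leQ (Q : Set Γ) (g + h) u}.Finite := by
    refine Set.Finite.subset
      (Set.Finite.biUnion TV.finite_toSet fun t _ => hWd (u - t)) ?_
    rintro h ⟨hhW, g, hgV, hle⟩
    obtain ⟨t, htT, hth⟩ := hTV g hgV
    refine Set.mem_biUnion htT ⟨hhW, step h g t ?_ hth⟩
    rwa [add_comm]
  refine ⟨?_, h1, h2⟩
  refine Set.Finite.subset (h1.prod h2) ?_
  rintro ⟨g, h⟩ ⟨hgV, hhW, hle⟩
  exact ⟨⟨hgV, h, hhW, hle⟩, ⟨hhW, g, hgV, hle⟩⟩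
end

section
/- Let R be a PDCF Γ-graded k-algebra with graded maximal ideal R_+ and M a BDF Γ-graded R-module. Then there exists a BDF family (x_i | i ∈ I) of homogeneous elements of M which generates M as an R-module and whose residues modulo R_+M form a k-basis of M/R_+M; in particular, (x_i | i ∈ I) is a minimal R-spanning family of M (no proper subfamily generates M). -/
/-!
Write `N_g` for the degree-`g` part of `R₊M`, spanned by the products `r • x` with `r ∈ R_q`,
`q ≠ 0` and `x ∈ M_{g-q}`; pointedness of `Supp R` makes `R₊M = ⊕_g N_g`. In each degree pick
linearly independent elements spanning a complement of `N_g` in `M_g`. Their residues form a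
`k`-basis of `M/R₊M`. They generate `M` over `R` by induction along `≤_Q`, which is well-founded
on `Supp M` since it is downward finite. As `R = k ⊕ R₊`, the `R`-span of residues in `M/R₊M` is
their `k`-span, so no proper subfamily generates `M`.
-/

open scoped DirectSum

/-- The graded maximal ideal `R₊ = ⊕_{q >_Q 0} R_q`. -/
def gradedIrrelevant {k Γ R : Type*} [Field k] [AddCommGroup Γ]
    [CommRing R] [Algebra k R] (𝒜 : Γ → Submodule k R) : Ideal R :=
  Ideal.span (⋃ g ∈ {g : Γ | g ∈ suppOf 𝒜 ∧ g ≠ 0}, (𝒜 g : Set R))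

open Submodule

section Order

variable {Γ : Type*} [AddCommGroup Γ] {Q U V : Set Γ}

theorem DownwardFinite.mono (hU : DownwardFinite Q U) (hVU : V ⊆ U) : DownwardFinite Q V :=
  fun g => (hU g).subset fun _ ⟨hu, hle⟩ => ⟨hVU hu, hle⟩

theorem FinBddBelow.mono (hU : FinBddBelow Q U) (hVU : V ⊆ U) : FinBddBelow Q V :=
  let ⟨T, hT⟩ := hU
  ⟨T, fun u hu => hT u (hVU hu)⟩

/-- The number of elements of `U` strictly `Q`-below `b` is finite and drops along the relation. -/
theorem DownwardFinite.wellFounded (hU : DownwardFinite Q U)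
    (hadd : ∀ p ∈ Q, ∀ q ∈ Q, p + q ∈ Q) (hpointed : IsPointed Q) :
    WellFounded fun a b : Γ => a ∈ U ∧ ∃ q ∈ Q, q ≠ 0 ∧ a + q = b := by
  let below : Γ → Set Γ := fun b => {u ∈ U | ∃ q ∈ Q, q ≠ 0 ∧ u + q = b}
  have hfin : ∀ b, (below b).Finite := fun b =>
    (hU b).subset fun u ⟨hu, q, hq, _, e⟩ => ⟨hu, q, hq, e⟩
  refine Subrelation.wf (r := InvImage (· < ·) fun b => (below b).ncard) ?_
    (InvImage.wf _ wellFounded_lt)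
  rintro a _ ⟨ha, q, hq, hq0, rfl⟩
  refine Set.ncard_lt_ncard ⟨?_, fun h => ?_⟩ (hfin _)
  · rintro u ⟨hu, p, hp, hp0, rfl⟩
    exact ⟨hu, p + q, hadd p hp q hq, fun h => hp0 (hpointed p hp q hq h).1, (add_assoc u p q).symm⟩
  · obtain ⟨-, p, -, hp0, e⟩ := h ⟨ha, q, hq, hq0, rfl⟩
    exact hp0 (add_eq_left.mp e)

end Order

theorem mem_suppOf_of_mem {Γ k V : Type*} [Semiring k] [AddCommMonoid V] [Module k V]
    {ℱ : Γ → Submodule k V} {g : Γ} {x : V} (hx : x ∈ ℱ g) (hx0 : x ≠ 0) : g ∈ suppOf ℱ :=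
  fun h => hx0 (by rwa [h, mem_bot] at hx)

theorem suppOf_add_mem {Γ k R : Type*} [Add Γ] [Semiring k] [Semiring R] [NoZeroDivisors R]
    [Module k R] (𝒜 : Γ → Submodule k R) [SetLike.GradedMul 𝒜] {p q : Γ}
    (hp : p ∈ suppOf 𝒜) (hq : q ∈ suppOf 𝒜) : p + q ∈ suppOf 𝒜 := by
  obtain ⟨a, ha, ha0⟩ := (Submodule.ne_bot_iff _).mp hp
  obtain ⟨b, hb, hb0⟩ := (Submodule.ne_bot_iff _).mp hq
  exact mem_suppOf_of_mem (SetLike.mul_mem_graded ha hb) (mul_ne_zero ha0 hb0)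

section Decomposition

variable {ι k M : Type*} [DecidableEq ι] [Ring k] [AddCommGroup M] [Module k M]
  {ℳ : ι → Submodule k M} [DirectSum.Decomposition ℳ]

theorem decompose_mem_of_mem_iSup {F : ι → Submodule k M} (hF : ∀ i, F i ≤ ℳ i) {x : M}
    (hx : x ∈ ⨆ i, F i) (i : ι) : (DirectSum.decompose ℳ x i : M) ∈ F i := by
  induction hx using iSup_induction' with
  | mem j y hy =>
    by_cases hji : j = i
    · subst hji
      rwa [DirectSum.decompose_of_mem_same ℳ (hF j hy)]
    · rw [DirectSum.decompose_of_mem_ne ℳ (hF j hy) hji]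
      exact zero_mem _
  | zero => simp
  | add y z _ _ hy hz =>
    rw [DirectSum.decompose_add, DirectSum.add_apply, coe_add]
    exact add_mem hy hz

theorem linearIndepOn_iUnion_of_subset {s : ι → Set M} (hsub : ∀ i, s i ⊆ ℳ i)
    (hli : ∀ i, LinearIndepOn k id (s i)) : LinearIndepOn k id (⋃ i, s i) := by
  refine linearIndepOn_id_iUnion_finite hli fun i t _ hit => ?_
  refine ((DirectSum.Decomposition.isInternal ℳ).submodule_iSupIndep i).mono
    (span_le.mpr (hsub i)) (iSup₂_le fun j hj => ?_)
  exact (span_le.mpr (hsub j)).trans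
    (le_iSup₂ (f := fun j (_ : j ≠ i) => ℳ j) j fun h => hit (h ▸ hj))

end Decomposition

theorem Submodule.exists_linearIndepOn_sup_eq_of_le {K V : Type*} [DivisionRing K]
    [AddCommGroup V] [Module K V] {N W : Submodule K V} (hNW : N ≤ W) :
    ∃ s ⊆ (W : Set V), LinearIndepOn K id s ∧ span K s ⊔ N = W ∧ Disjoint (span K s) N := by
  obtain ⟨C, hC⟩ := ComplementedLattice.exists_isCompl (⟨N, hNW⟩ : Set.Iic W)
  obtain ⟨s, hsC, hspan, hli⟩ := exists_linearIndependent K ((C : Submodule K V) : Set V)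
  rw [span_eq] at hspan
  refine ⟨s, hsC.trans C.2, hli, ?_, ?_⟩
  · rw [hspan, sup_comm]
    exact congrArg Subtype.val hC.sup_eq_top
  · rw [hspan, disjoint_comm, disjoint_iff]
    exact congrArg Subtype.val hC.inf_eq_bot

theorem LinearIndepOn.finite_of_subset {K V : Type*} [DivisionRing K] [AddCommGroup V]
    [Module K V] {s : Set V} {W : Submodule K V} [FiniteDimensional K W]
    (hli : LinearIndepOn K id s) (hsW : s ⊆ W) : s.Finite := by
  have : LinearIndependent K fun x : s => (⟨x, hsW x.2⟩ : W) :=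
    LinearIndependent.of_comp W.subtype hli
  exact Set.finite_coe_iff.mp this.finite_of_isNoetherian

section IrrelevantComponent

variable {k Γ R M : Type*} [Field k] [AddCommGroup Γ] [CommRing R] [Algebra k R]
  {𝒜 : Γ → Submodule k R} [AddCommGroup M] [Module R M] [Module k M] {ℳ : Γ → Submodule k M}

variable (𝒜 ℳ) in
/-- The degree-`g` part of `R₊M`. -/
def irrelevantComponent (g : Γ) : Submodule k M :=
  span k {m | ∃ q ≠ 0, ∃ r ∈ 𝒜 q, ∃ x ∈ ℳ (g - q), r • x = m}

theorem irrelevantComponent_le [SetLike.GradedSMul 𝒜 ℳ] (g : Γ) :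
    irrelevantComponent 𝒜 ℳ g ≤ ℳ g := by
  refine span_le.mpr ?_
  rintro _ ⟨q, -, r, hr, x, hx, rfl⟩
  simpa using SetLike.GradedSMul.smul_mem hr hx

theorem mem_gradedIrrelevant_of_mem {a : R} {q : Γ} (ha : a ∈ 𝒜 q) (hq : q ≠ 0) :
    a ∈ gradedIrrelevant 𝒜 := by
  by_cases ha0 : a = 0
  · simp [ha0]
  exact Ideal.subset_span (Set.mem_biUnion ⟨mem_suppOf_of_mem ha ha0, hq⟩ ha)

variable [IsScalarTower k R M]

theorem irrelevantComponent_le_smul_top (g : Γ) :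
    irrelevantComponent 𝒜 ℳ g ≤ (gradedIrrelevant 𝒜 • (⊤ : Submodule R M)).restrictScalars k := by
  refine span_le.mpr ?_
  rintro _ ⟨q, hq, r, hr, x, -, rfl⟩
  exact smul_mem_smul (I := gradedIrrelevant 𝒜) (N := ⊤) (mem_gradedIrrelevant_of_mem hr hq)
    mem_top

theorem smul_mem_irrelevantComponent [SetLike.GradedMul 𝒜] (hpointed : IsPointed (suppOf 𝒜))
    {p g : Γ} {a : R} (ha : a ∈ 𝒜 p) {y : M} (hy : y ∈ irrelevantComponent 𝒜 ℳ g) :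
    a • y ∈ irrelevantComponent 𝒜 ℳ (p + g) := by
  induction hy using span_induction with
  | mem _ h =>
    obtain ⟨q, hq, r, hr, x, hx, rfl⟩ := h
    by_cases har : a * r = 0
    · simp [← mul_smul, har]
    have hpq : p + q ≠ 0 := fun h => hq (hpointed p (mem_suppOf_of_mem ha (left_ne_zero_of_mul har))
      q (mem_suppOf_of_mem hr (right_ne_zero_of_mul har)) h).2
    refine subset_span ⟨p + q, hpq, a * r, SetLike.mul_mem_graded ha hr, x, ?_, mul_smul a r x⟩
    rwa [add_sub_add_left_eq_sub]
  | zero => simp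
  | add y z _ _ hy hz => rw [smul_add]; exact add_mem hy hz
  | smul c y _ hy => rw [smul_comm]; exact smul_mem _ c hy

variable [DecidableEq Γ] [GradedAlgebra 𝒜]

theorem smul_mem_iSup_irrelevantComponent (hpointed : IsPointed (suppOf 𝒜)) (r : R) {y : M}
    (hy : y ∈ ⨆ g, irrelevantComponent 𝒜 ℳ g) :
    r • y ∈ ⨆ g, irrelevantComponent 𝒜 ℳ g := by
  classical
  rw [← DirectSum.sum_support_decompose 𝒜 r, Finset.sum_smul]
  refine sum_mem fun p _ => ?_
  refine iSup_induction _ (motive := fun y => _ • y ∈ _) hy (fun g y hy => ?_) (by simp)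
    fun y z hy hz => by rw [smul_add]; exact add_mem hy hz
  exact mem_iSup_of_mem (p + g) (smul_mem_irrelevantComponent hpointed (coe_mem _) hy)

variable [DirectSum.Decomposition ℳ]

theorem smul_top_le_iSup_irrelevantComponent (hpointed : IsPointed (suppOf 𝒜)) :
    (gradedIrrelevant 𝒜 • (⊤ : Submodule R M)).restrictScalars k ≤
      ⨆ g, irrelevantComponent 𝒜 ℳ g := by
  classical
  intro y hy
  rw [restrictScalars_mem] at hy
  refine smul_induction_on hy (fun r hr m _ => ?_) fun y z hy hz => add_mem hy hz
  induction hr using span_induction with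
  | mem a ha =>
    obtain ⟨q, ⟨-, hq⟩, ha⟩ := Set.mem_iUnion₂.mp ha
    rw [← DirectSum.sum_support_decompose ℳ m, Finset.smul_sum]
    refine sum_mem fun h _ => mem_iSup_of_mem (q + h) (subset_span ⟨q, hq, a, ha, _, ?_, rfl⟩)
    rw [add_sub_cancel_left]
    exact coe_mem _
  | zero => simp
  | add r₁ r₂ _ _ h₁ h₂ => rw [add_smul]; exact add_mem h₁ h₂
  | smul c r _ h => rw [smul_eq_mul, mul_smul]; exact smul_mem_iSup_irrelevantComponent hpointed c h

theorem decompose_mem_irrelevantComponent [SetLike.GradedSMul 𝒜 ℳ]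
    (hpointed : IsPointed (suppOf 𝒜)) {x : M} (hx : x ∈ gradedIrrelevant 𝒜 • (⊤ : Submodule R M))
    (g : Γ) : (DirectSum.decompose ℳ x g : M) ∈ irrelevantComponent 𝒜 ℳ g :=
  decompose_mem_of_mem_iSup irrelevantComponent_le
    (smul_top_le_iSup_irrelevantComponent hpointed hx) g

end IrrelevantComponent

section Quotient

variable {k R M : Type*} [Field k] [CommRing R] [Algebra k R] [AddCommGroup M] [Module R M]
  [Module k M] [IsScalarTower k R M] {J : Ideal R}

theorem restrictScalars_span_quotient_smul_top (hJ : ∀ r : R, ∃ c : k, r - algebraMap k R c ∈ J)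
    (X : Set (M ⧸ J • (⊤ : Submodule R M))) : (span R X).restrictScalars k = span k X := by
  refine le_antisymm (fun y hy => ?_) (span_le_restrictScalars k R X)
  induction hy using span_induction with
  | mem z hz => exact subset_span hz
  | zero => exact zero_mem _
  | add y z _ _ hy hz => exact add_mem hy hz
  | smul r z _ hz =>
    obtain ⟨c, hc⟩ := hJ r
    obtain ⟨m, rfl⟩ := Submodule.Quotient.mk_surjective _ z
    have hkill : (r - algebraMap k R c) • (Submodule.Quotient.mk m : M ⧸ J • (⊤ : Submodule R M))
        = 0 := by
      rw [← Submodule.Quotient.mk_smul, Submodule.Quotient.mk_eq_zero]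
      exact smul_mem_smul hc mem_top
    rw [sub_smul, algebraMap_smul, sub_eq_zero] at hkill
    rw [hkill]
    exact smul_mem _ c hz

theorem span_ne_top_of_ssubset (hJ : ∀ r : R, ∃ c : k, r - algebraMap k R c ∈ J) {s t : Set M}
    (hli : LinearIndepOn k (fun m => (Submodule.Quotient.mk m : M ⧸ J • (⊤ : Submodule R M))) s)
    (hts : t ⊂ s) : span R t ≠ ⊤ := by
  intro htop
  obtain ⟨x, hxs, hxt⟩ := Set.exists_of_ssubset hts
  have hx : (J • ⊤ : Submodule R M).mkQ x ∈ span R ((J • ⊤ : Submodule R M).mkQ '' t) := by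
    rw [← map_span, htop]
    exact mem_map_of_mem mem_top
  rw [← restrictScalars_mem k, restrictScalars_span_quotient_smul_top hJ] at hx
  exact hli.notMem_span hxs (span_mono (Set.image_mono
    (Set.subset_sdiff_singleton hts.subset hxt)) hx)

end Quotient

section Graded

variable {k Γ R M : Type*} [Field k] [AddCommGroup Γ] [DecidableEq Γ] [CommRing R] [Algebra k R]
  {𝒜 : Γ → Submodule k R} [AddCommGroup M] [Module R M] [Module k M]
  [IsScalarTower k R M] {ℳ : Γ → Submodule k M} [DirectSum.Decomposition ℳ]

theorem exists_algebraMap_sub_mem_gradedIrrelevant [GradedAlgebra 𝒜]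
    (hconn : 𝒜 0 = (1 : Submodule k R)) (r : R) :
    ∃ c : k, r - algebraMap k R c ∈ gradedIrrelevant 𝒜 := by
  classical
  have hr₀ : (DirectSum.decompose 𝒜 r 0 : R) ∈ (1 : Submodule k R) := hconn ▸ coe_mem _
  obtain ⟨c, hc⟩ := mem_one.mp hr₀
  refine ⟨c, ?_⟩
  set r' := r - algebraMap k R c
  have h0 : (DirectSum.decompose 𝒜 r' 0 : R) = 0 := by
    rw [DirectSum.decompose_sub, DirectSum.sub_apply, Submodule.coe_sub, hc,
      DirectSum.decompose_of_mem_same 𝒜 (coe_mem _), sub_self]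
  rw [← DirectSum.sum_support_decompose 𝒜 r']
  refine sum_mem fun g hg => mem_gradedIrrelevant_of_mem (coe_mem _) ?_
  rintro rfl
  exact DFinsupp.mem_support_iff.mp hg (ZeroMemClass.coe_eq_zero.mp h0)

/-- Graded Nakayama: elements of degree `g` are reached from `s` and from elements of degrees
strictly `Q`-below `g`, an induction that is well-founded because `Supp M` is downward finite. -/
theorem span_eq_top_of_le_sup_irrelevantComponent [NoZeroDivisors R] [SetLike.GradedMul 𝒜]
    (hpointed : IsPointed (suppOf 𝒜)) (hMd : DownwardFinite (suppOf 𝒜) (suppOf ℳ)) {s : Set M}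
    (hs : ∀ g, ℳ g ≤ span k s ⊔ irrelevantComponent 𝒜 ℳ g) : span R s = ⊤ := by
  have hle : ∀ g, ℳ g ≤ (span R s).restrictScalars k := by
    intro g
    induction g using (hMd.wellFounded (fun p hp q hq => suppOf_add_mem 𝒜 hp hq)
      hpointed).induction with
    | _ g ih =>
    refine (hs g).trans (sup_le (span_le_restrictScalars k R s) (span_le.mpr ?_))
    rintro _ ⟨q, hq, r, hr, x, hx, rfl⟩
    by_cases hr0 : r = 0
    · simp [hr0]
    by_cases hx0 : x = 0
    · simp [hx0]
    exact smul_mem _ r (ih (g - q) ⟨mem_suppOf_of_mem hx hx0, q, mem_suppOf_of_mem hr hr0, hq,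
      sub_add_cancel g q⟩ hx)
  rw [← restrictScalars_eq_top_iff k, eq_top_iff,
    ← (DirectSum.Decomposition.isInternal ℳ).submodule_iSup_eq_top]
  exact iSup_le hle

theorem span_range_mk_eq_top {s : Set M} (hs : ∀ g, ℳ g ≤ span k s ⊔ irrelevantComponent 𝒜 ℳ g) :
    span k (Set.range fun m : s =>
      (Submodule.Quotient.mk (m : M) : M ⧸ (gradedIrrelevant 𝒜 • ⊤ : Submodule R M))) = ⊤ := by
  set I := (gradedIrrelevant 𝒜 • ⊤ : Submodule R M)
  have hM : (⊤ : Submodule k M) ≤ span k s ⊔ I.restrictScalars k := by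
    rw [← (DirectSum.Decomposition.isInternal ℳ).submodule_iSup_eq_top]
    exact iSup_le fun g => (hs g).trans (sup_le_sup_left (irrelevantComponent_le_smul_top g) _)
  rw [eq_top_iff]
  rintro y -
  obtain ⟨m, rfl⟩ := Submodule.Quotient.mk_surjective I y
  obtain ⟨a, ha, b, hb, rfl⟩ := mem_sup.mp (hM (mem_top (x := m)))
  rw [Submodule.Quotient.mk_add, (Submodule.Quotient.mk_eq_zero I).mpr hb, add_zero,
    ← Set.image_eq_range]
  exact span_image (I.mkQ.restrictScalars k) ▸ mem_map_of_mem ha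

theorem linearIndepOn_mk_iUnion [GradedAlgebra 𝒜] [SetLike.GradedSMul 𝒜 ℳ]
    (hpointed : IsPointed (suppOf 𝒜)) {s : Γ → Set M} (hsub : ∀ g, s g ⊆ ℳ g)
    (hli : ∀ g, LinearIndepOn k id (s g))
    (hdisj : ∀ g, Disjoint (span k (s g)) (irrelevantComponent 𝒜 ℳ g)) :
    LinearIndepOn k
      (fun m => (Submodule.Quotient.mk m : M ⧸ gradedIrrelevant 𝒜 • (⊤ : Submodule R M)))
      (⋃ g, s g) := by
  set I := (gradedIrrelevant 𝒜 • ⊤ : Submodule R M)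
  -- each homogeneous component of such an `x` lies in `span k (s g) ⊓ N_g = ⊥`
  have hdisjI : Disjoint (span k (Set.range fun x : (⋃ g, s g) => (x : M)))
      (LinearMap.ker (I.mkQ.restrictScalars k)) := by
    rw [Subtype.range_coe, span_iUnion, disjoint_def]
    intro x hx hxI
    rw [LinearMap.mem_ker, LinearMap.restrictScalars_apply, mkQ_apply, Quotient.mk_eq_zero] at hxI
    have hcomp : ∀ g, DirectSum.decompose ℳ x g = 0 := fun g => by
      rw [← ZeroMemClass.coe_eq_zero]
      exact disjoint_def.mp (hdisj g) _
        (decompose_mem_of_mem_iSup (fun g => span_le.mpr (hsub g)) hx g)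
        (decompose_mem_irrelevantComponent hpointed hxI g)
    exact (DirectSum.decompose ℳ).injective (by ext1 g; simp [hcomp])
  exact (linearIndepOn_iUnion_of_subset hsub hli).map hdisjI

end Graded

theorem exists_minimal_R_spanning_family_general
    {k Γ R M : Type*} [Field k] [AddCommGroup Γ] [DecidableEq Γ]
    [CommRing R] [IsDomain R] [Algebra k R]
    (𝒜 : Γ → Submodule k R) [GradedAlgebra 𝒜]
    [AddCommGroup M] [Module R M] [Module k M] [IsScalarTower k R M]
    (ℳ : Γ → Submodule k M) [DirectSum.Decomposition ℳ] [SetLike.GradedSMul 𝒜 ℳ]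
    -- `R` is PDCF
    (hconn : 𝒜 0 = (1 : Submodule k R))
    (hpointed : IsPointed (suppOf 𝒜))
    -- `M` is BDF
    (hMb : FinBddBelow (suppOf 𝒜) (suppOf ℳ))
    (hMd : DownwardFinite (suppOf 𝒜) (suppOf ℳ))
    (hMf : ∀ g : Γ, FiniteDimensional k (ℳ g)) :
    ∃ (s : Set M) (d : s → Γ),
      -- each element is a nonzero homogeneous element of degree `d`
      (∀ m : s, (m : M) ≠ 0 ∧ (m : M) ∈ ℳ (d m)) ∧
      -- `(x_i)` is a BDF family
      BDFFamily (suppOf 𝒜) d ∧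
      -- it generates `M` over `R`
      Submodule.span R s = ⊤ ∧
      -- the residues form a `k`-basis of `M/R₊M`
      LinearIndependent k (fun m : s =>
        (Submodule.Quotient.mk (m : M) :
          M ⧸ (gradedIrrelevant 𝒜 • (⊤ : Submodule R M)))) ∧
      Submodule.span k (Set.range fun m : s =>
        (Submodule.Quotient.mk (m : M) :
          M ⧸ (gradedIrrelevant 𝒜 • (⊤ : Submodule R M)))) = ⊤ ∧
      -- minimality: no proper subfamily generates `M` over `R`
      (∀ t : Set M, t ⊂ s → Submodule.span R t ≠ ⊤) := by
  choose sg hsub hli hsup hdisj using fun g =>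
    exists_linearIndepOn_sup_eq_of_le (irrelevantComponent_le (𝒜 := 𝒜) (ℳ := ℳ) g)
  set s := ⋃ g, sg g
  have hle : ∀ g, ℳ g ≤ span k s ⊔ irrelevantComponent 𝒜 ℳ g := fun g =>
    (hsup g).ge.trans (sup_le_sup_right (span_mono (Set.subset_iUnion sg g)) _)
  choose d hd using fun m : s => Set.mem_iUnion.mp m.2
  have hdeg : ∀ m : s, (m : M) ≠ 0 ∧ (m : M) ∈ ℳ (d m) := fun m =>
    ⟨(hli _).ne_zero (hd m), hsub _ (hd m)⟩
  have hrange : Set.range d ⊆ suppOf ℳ := by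
    rintro _ ⟨m, rfl⟩
    exact mem_suppOf_of_mem (hdeg m).2 (hdeg m).1
  have hfiber : ∀ γ, {m : s | d m = γ}.Finite := fun γ =>
    ((hli γ).finite_of_subset (hsub γ)).preimage Subtype.val_injective.injOn |>.subset
      fun m hm => hm ▸ hd m
  have hLI := linearIndepOn_mk_iUnion hpointed hsub hli hdisj
  exact ⟨s, d, hdeg, ⟨hMd.mono hrange, hMb.mono hrange, hfiber⟩,
    span_eq_top_of_le_sup_irrelevantComponent hpointed hMd hle, hLI, span_range_mk_eq_top hle,
    fun t hts => span_ne_top_of_ssubset (exists_algebraMap_sub_mem_gradedIrrelevant hconn) hLI hts⟩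

/-- every BDF `Γ`-graded module `M` over a PDCF `Γ`-graded `k`-algebra `R`
admits a BDF family of homogeneous elements generating `M` over `R`, whose residues form
a `k`-basis of `M/R₊M`; in particular it is a minimal `R`-spanning family. -/
theorem exists_minimal_R_spanning_family
    {k Γ R M : Type*} [Field k] [AddCommGroup Γ] [DecidableEq Γ]
    [CommRing R] [IsDomain R] [Algebra k R]
    (𝒜 : Γ → Submodule k R) [GradedAlgebra 𝒜]
    [AddCommGroup M] [Module R M] [Module k M] [IsScalarTower k R M]
    (ℳ : Γ → Submodule k M) [DirectSum.Decomposition ℳ] [SetLike.GradedSMul 𝒜 ℳ]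
    -- `R` is PDCF
    (hconn : 𝒜 0 = (1 : Submodule k R))
    (hfd : ∀ g : Γ, FiniteDimensional k (𝒜 g))
    (hpointed : IsPointed (suppOf 𝒜))
    (hdfQ : DownwardFinite (suppOf 𝒜) (suppOf 𝒜))
    -- `M` is BDF
    (hMb : FinBddBelow (suppOf 𝒜) (suppOf ℳ))
    (hMd : DownwardFinite (suppOf 𝒜) (suppOf ℳ))
    (hMf : ∀ g : Γ, FiniteDimensional k (ℳ g)) :
    ∃ (s : Set M) (d : s → Γ),
      -- each element is a nonzero homogeneous element of degree `d`
      (∀ m : s, (m : M) ≠ 0 ∧ (m : M) ∈ ℳ (d m)) ∧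
      -- `(x_i)` is a BDF family
      BDFFamily (suppOf 𝒜) d ∧
      -- it generates `M` over `R`
      Submodule.span R s = ⊤ ∧
      -- the residues form a `k`-basis of `M/R₊M`
      LinearIndependent k (fun m : s =>
        (Submodule.Quotient.mk (m : M) :
          M ⧸ (gradedIrrelevant 𝒜 • (⊤ : Submodule R M)))) ∧
      Submodule.span k (Set.range fun m : s =>
        (Submodule.Quotient.mk (m : M) :
          M ⧸ (gradedIrrelevant 𝒜 • (⊤ : Submodule R M)))) = ⊤ ∧
      -- minimality: no proper subfamily generates `M` over `R`
      (∀ t : Set M, t ⊂ s → Submodule.span R t ≠ ⊤) :=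
  exists_minimal_R_spanning_family_general 𝒜 ℳ hconn hpointed hMb hMd hMf
end

section
/- Let R be a PDCF Γ-graded k-algebra with support monoid Q. Then the Hilbert series H_Γ(R) = Σ_{g∈Γ} dim_k(R_g) t^g is a unit in the ring ℤ[[Q]]{Γ}, and its multiplicative inverse is supported on Q. -/
open scoped DirectSum

section Aux
variable {Γ : Type*} [AddCommGroup Γ] [DecidableEq Γ]

lemma downSet_card_lt {Q : Set Γ} (hdf : DownwardFinite Q Q)
    (hadd : ∀ p ∈ Q, ∀ q ∈ Q, p + q ∈ Q) (hpt : IsPointed Q)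
    {u g : Γ} (hu : u ∈ Q) (hg : g ∈ Q) (hle : leQ Q g u) (hg0 : g ≠ 0)
    (h0 : (0:Γ) ∈ Q) :
    ((hdf (u - g)).toFinset).card < ((hdf u).toFinset).card := by
  obtain ⟨a, ha, hga⟩ := hle
  have hug : u - g = a := by rw [← hga]; abel
  apply Finset.card_lt_card
  have hsub : (hdf (u - g)).toFinset ⊆ (hdf u).toFinset := by
    intro p hp
    rw [Set.Finite.mem_toFinset] at hp ⊢
    obtain ⟨hpQ, b, hb, hpb⟩ := hp
    exact ⟨hpQ, b + g, hadd b hb g hg, by rw [← hga, ← add_assoc, hpb, hug]; abel⟩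
  refine (Finset.ssubset_iff_of_subset hsub).mpr ⟨u, ?_, ?_⟩
  · rw [Set.Finite.mem_toFinset]; exact ⟨hu, 0, h0, add_zero u⟩
  · rw [Set.Finite.mem_toFinset]
    rintro ⟨-, c, hc, hcc⟩
    have hcg : c + g = 0 := by
      have h2 : u + (c + g) = u + 0 := by rw [add_zero, ← add_assoc, hcc]; abel
      exact add_left_cancel h2
    exact hg0 (hpt c hc g hg hcg).2

open Classical in
noncomputable def binv (Q : Set Γ) (H : Γ → ℤ) (hdf : DownwardFinite Q Q)
    (h0 : (0:Γ) ∈ Q) (hadd : ∀ p ∈ Q, ∀ q ∈ Q, p + q ∈ Q) (hpt : IsPointed Q)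
    (u : Γ) : ℤ :=
  if hu : u ∈ Q then
    if u = 0 then 1
    else - ∑ g ∈ ((hdf u).toFinset.filter (fun g => g ≠ 0)).attach,
        H g.1 * binv Q H hdf h0 hadd hpt (u - g.1)
  else 0
termination_by (hdf u).toFinset.card
decreasing_by
  have hg := g.2
  rw [Finset.mem_filter, Set.Finite.mem_toFinset] at hg
  exact downSet_card_lt hdf hadd hpt hu hg.1.1 hg.1.2 hg.2 h0

end Aux

section Aux2
variable {Γ : Type*} [AddCommGroup Γ] [DecidableEq Γ]
variable {Q : Set Γ} {H : Γ → ℤ} (hdf : DownwardFinite Q Q)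
  (h0 : (0:Γ) ∈ Q) (hadd : ∀ p ∈ Q, ∀ q ∈ Q, p + q ∈ Q) (hpt : IsPointed Q)

lemma binv_not_mem {u : Γ} (hu : u ∉ Q) : binv Q H hdf h0 hadd hpt u = 0 := by
  rw [binv]; simp [hu]

lemma binv_zero : binv Q H hdf h0 hadd hpt 0 = 1 := by
  rw [binv]; simp [h0]

lemma binv_rec {u : Γ} (hu : u ∈ Q) (hu0 : u ≠ 0) :
    binv Q H hdf h0 hadd hpt u
      = - ∑ g ∈ ((hdf u).toFinset.filter (fun g => g ≠ 0)).attach,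
          H g.1 * binv Q H hdf h0 hadd hpt (u - g.1) := by
  rw [binv]; simp [hu, hu0]

lemma binv_support : Function.support (binv Q H hdf h0 hadd hpt) ⊆ Q := by
  intro u hu
  by_contra h
  exact hu (binv_not_mem hdf h0 hadd hpt h)
end Aux2

section Aux3
variable {Γ : Type*} [AddCommGroup Γ] [DecidableEq Γ]
variable {Q : Set Γ} {H : Γ → ℤ} (hdf : DownwardFinite Q Q)
  (h0 : (0:Γ) ∈ Q) (hadd : ∀ p ∈ Q, ∀ q ∈ Q, p + q ∈ Q) (hpt : IsPointed Q)

lemma conv_support (hHsupp : ∀ g, H g ≠ 0 → g ∈ Q) (u : Γ) :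
    {g : Γ | H g * binv Q H hdf h0 hadd hpt (u - g) ≠ 0} ⊆ {g ∈ Q | leQ Q g u} := by
  intro g hg
  have h1 : H g ≠ 0 := fun h => hg (by simp [h])
  have h2 : binv Q H hdf h0 hadd hpt (u - g) ≠ 0 := fun h => hg (by simp [h])
  have hugQ : u - g ∈ Q := binv_support hdf h0 hadd hpt h2
  exact ⟨hHsupp g h1, u - g, hugQ, by abel⟩

lemma conv_binv (hH0 : H 0 = 1) (hHsupp : ∀ g, H g ≠ 0 → g ∈ Q) (u : Γ) :
    ∑ᶠ g, H g * binv Q H hdf h0 hadd hpt (u - g) = if u = 0 then 1 else 0 := by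
  set b := binv Q H hdf h0 hadd hpt with hb
  by_cases hu0 : u = 0
  · subst hu0
    rw [if_pos rfl]
    have hz : ∀ g : Γ, g ≠ 0 → H g * b (0 - g) = 0 := by
      intro g hg
      by_contra hne
      obtain ⟨hgQ, q, hq, hgq⟩ := conv_support hdf h0 hadd hpt hHsupp 0 hne
      exact hg (hpt g hgQ q hq hgq).1
    rw [finsum_eq_single _ 0 hz, sub_zero, hH0, one_mul, hb, binv_zero]
  · rw [if_neg hu0]
    by_cases hu : u ∈ Q
    · have hsupp : Function.support (fun g => H g * b (u - g))
          ⊆ ((hdf u).toFinset : Set Γ) := by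
        intro g hg
        rw [Set.Finite.coe_toFinset]
        exact conv_support hdf h0 hadd hpt hHsupp u hg
      rw [finsum_eq_finset_sum_of_support_subset _ hsupp]
      have h0D : (0:Γ) ∈ (hdf u).toFinset := by
        rw [Set.Finite.mem_toFinset]; exact ⟨h0, u, hu, zero_add u⟩
      rw [← Finset.sum_filter_add_sum_filter_not ((hdf u).toFinset) (fun g => g = 0)]
      have hfilter0 : (hdf u).toFinset.filter (fun g => g = 0) = {0} := by
        ext x
        simp only [Finset.mem_filter, Finset.mem_singleton]
        exact ⟨fun h => h.2, fun h => ⟨h ▸ h0D, h⟩⟩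
      rw [hfilter0, Finset.sum_singleton, sub_zero, hH0, one_mul]
      have hrec := binv_rec (H := H) hdf h0 hadd hpt hu hu0
      rw [Finset.sum_attach ((hdf u).toFinset.filter (fun g => g ≠ 0))
        (fun g => H g * b (u - g))] at hrec
      simp only [ne_eq] at hrec ⊢
      rw [← hb] at hrec
      rw [hrec]
      ring
    · have hz : ∀ g : Γ, H g * b (u - g) = 0 := by
        intro g
        by_contra h
        obtain ⟨hgQ, q, hq, hgq⟩ := conv_support hdf h0 hadd hpt hHsupp u h
        exact hu (hgq ▸ hadd g hgQ q hq)
      rw [finsum_congr hz, finsum_zero]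

end Aux3


/-- the Hilbert series `H_Γ(R) = Σ_g dim_k(R_g) t^g` of a PDCF `Γ`-graded
`k`-algebra `R` is a unit in `ℤ[[Q]]{Γ}`: there is a series `b` whose support is
finitely bounded below, downward finite, and contained in `Q`, and which is a
two-sided convolution inverse of `H_Γ(R)`. -/
theorem hilbert_series_isUnit
    {k Γ R : Type*} [Field k] [AddCommGroup Γ] [DecidableEq Γ]
    [CommRing R] [IsDomain R] [Algebra k R]
    (𝒜 : Γ → Submodule k R) [GradedAlgebra 𝒜]
    -- `R` is PDCF
    (hconn : 𝒜 0 = (1 : Submodule k R))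
    (hfd : ∀ g : Γ, FiniteDimensional k (𝒜 g))
    (hpointed : IsPointed (suppOf 𝒜))
    (hdfQ : DownwardFinite (suppOf 𝒜) (suppOf 𝒜)) :
    ∃ b : Γ → ℤ,
      -- `b ∈ ℤ[[Q]]{Γ}` ...
      FinBddBelow (suppOf 𝒜) (Function.support b) ∧
      DownwardFinite (suppOf 𝒜) (Function.support b) ∧
      -- ... and `b` is supported on `Q`
      Function.support b ⊆ suppOf 𝒜 ∧
      -- the convolution products are well-defined ...
      (∀ u : Γ, {g : Γ | (Module.finrank k (𝒜 g) : ℤ) * b (u - g) ≠ 0}.Finite) ∧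
      -- ... and `b` is the inverse of the Hilbert series of `R`
      (∀ u : Γ, ∑ᶠ g : Γ, (Module.finrank k (𝒜 g) : ℤ) * b (u - g)
          = if u = 0 then 1 else 0) ∧
      (∀ u : Γ, ∑ᶠ g : Γ, b g * (Module.finrank k (𝒜 (u - g)) : ℤ)
          = if u = 0 then 1 else 0) := by
  classical
  set Q : Set Γ := suppOf 𝒜 with hQ
  set H : Γ → ℤ := fun g => (Module.finrank k (𝒜 g) : ℤ) with hH
  have h0 : (0:Γ) ∈ Q := by
    intro hbot
    rw [hconn] at hbot
    have h1 : (1:R) ∈ (1 : Submodule k R) := Submodule.one_le.mp le_rfl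
    rw [hbot, Submodule.mem_bot] at h1
    exact one_ne_zero h1
  have hadd : ∀ p ∈ Q, ∀ q ∈ Q, p + q ∈ Q := by
    intro p hp q hq
    obtain ⟨x, hx, hx0⟩ := Submodule.exists_mem_ne_zero_of_ne_bot hp
    obtain ⟨y, hy, hy0⟩ := Submodule.exists_mem_ne_zero_of_ne_bot hq
    intro hbot
    have hxy : x * y ∈ 𝒜 (p + q) := SetLike.mul_mem_graded hx hy
    rw [hbot, Submodule.mem_bot] at hxy
    exact mul_ne_zero hx0 hy0 hxy
  have hH0 : H 0 = 1 := by
    have : Module.finrank k (𝒜 0) = 1 := by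
      rw [hconn, Submodule.one_eq_span]
      exact finrank_span_singleton one_ne_zero
    simp [hH, this]
  have hHsupp : ∀ g, H g ≠ 0 → g ∈ Q := by
    intro g hg
    by_contra hgQ
    have hbot : 𝒜 g = ⊥ := not_not.mp hgQ
    apply hg
    simp [hH, hbot]
  set b := binv Q H hdfQ h0 hadd hpointed with hb
  have hbsupp := binv_support (H := H) hdfQ h0 hadd hpointed
  refine ⟨b, ?_, ?_, hbsupp, ?_, ?_, ?_⟩
  · exact ⟨{0}, fun u hu => ⟨0, Finset.mem_singleton_self 0, u, hbsupp hu, zero_add u⟩⟩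
  · intro g
    exact (hdfQ g).subset (fun u hu => ⟨hbsupp hu.1, hu.2⟩)
  · intro u
    exact (hdfQ u).subset (conv_support hdfQ h0 hadd hpointed hHsupp u)
  · exact conv_binv hdfQ h0 hadd hpointed hH0 hHsupp
  · intro u
    have hcomp := finsum_comp_equiv (Equiv.subLeft u)
      (f := fun g => b g * H (u - g))
    have hcongr : ∀ g : Γ, b ((Equiv.subLeft u) g) * H (u - (Equiv.subLeft u) g)
        = H g * b (u - g) := by
      intro g
      simp only [Equiv.subLeft_apply, sub_sub_cancel]
      ring
    rw [← hcomp, finsum_congr hcongr]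
    exact conv_binv hdfQ h0 hadd hpointed hH0 hHsupp u
end

section
/- Let Q be a pointed submonoid of an abelian group Γ. If (g_i | i ∈ I) and (h_j | j ∈ J) are BDF families of elements of Γ, then (g_i + h_j | (i,j) ∈ I × J) is also a BDF family of elements of Γ. -/
open scoped DirectSum

/-- if `(g_i | i ∈ I)` and `(h_j | j ∈ J)` are BDF families of elements of
`Γ` (w.r.t. a pointed submonoid `Q`), then `(g_i + h_j | (i,j) ∈ I × J)` is also a BDF
family. -/
theorem sum_BDFFamily
    {Γ : Type*} [AddCommGroup Γ] (Q : AddSubmonoid Γ)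
    (hpointed : IsPointed (Q : Set Γ))
    {I J : Type*} (g : I → Γ) (h : J → Γ)
    (hg : BDFFamily (Q : Set Γ) g) (hh : BDFFamily (Q : Set Γ) h) :
    BDFFamily (Q : Set Γ) (fun p : I × J => g p.1 + h p.2) := by
  classical
  obtain ⟨hgdf, ⟨Tg, hTg⟩, hgfib⟩ := hg
  obtain ⟨hhdf, ⟨Th, hTh⟩, hhfib⟩ := hh
  -- auxiliary finite sets
  set A : Γ → Set Γ := fun γ => {u ∈ Set.range g | ∃ s ∈ Th, leQ (Q : Set Γ) u (γ - s)}
  set B : Γ → Set Γ := fun γ => {u ∈ Set.range h | ∃ t ∈ Tg, leQ (Q : Set Γ) u (γ - t)}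
  have hA : ∀ γ, (A γ).Finite := by
    intro γ
    refine Set.Finite.subset (Set.Finite.biUnion Th.finite_toSet
      (fun s _ => hgdf (γ - s))) ?_
    rintro u ⟨hu, s, hs, hle⟩
    exact Set.mem_biUnion hs ⟨hu, hle⟩
  have hB : ∀ γ, (B γ).Finite := by
    intro γ
    refine Set.Finite.subset (Set.Finite.biUnion Tg.finite_toSet
      (fun t _ => hhdf (γ - t))) ?_
    rintro u ⟨hu, t, ht, hle⟩
    exact Set.mem_biUnion ht ⟨hu, hle⟩
  have key : ∀ (γ : Γ) (i : I) (j : J), leQ (Q : Set Γ) (g i + h j) γ →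
      g i ∈ A γ ∧ h j ∈ B γ := by
    rintro γ i j ⟨q, hq, hqe⟩
    constructor
    · obtain ⟨s, hs, q1, hq1, hq1e⟩ := hTh (h j) ⟨j, rfl⟩
      exact ⟨⟨i, rfl⟩, s, hs, q1 + q, Q.add_mem hq1 hq,
        by rw [← hqe, ← hq1e]; abel⟩
    · obtain ⟨t, ht, q1, hq1, hq1e⟩ := hTg (g i) ⟨i, rfl⟩
      exact ⟨⟨j, rfl⟩, t, ht, q1 + q, Q.add_mem hq1 hq,
        by rw [← hqe, ← hq1e]; abel⟩
  refine ⟨?_, ?_, ?_⟩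
  · -- downward finite
    intro γ
    refine Set.Finite.subset (Set.Finite.image2 (· + ·) (hA γ) (hB γ)) ?_
    rintro u ⟨⟨⟨i, j⟩, rfl⟩, hle⟩
    obtain ⟨h1, h2⟩ := key γ i j hle
    exact Set.mem_image2_of_mem h1 h2
  · -- finitely bounded below
    refine ⟨Finset.image₂ (· + ·) Tg Th, ?_⟩
    rintro u ⟨⟨i, j⟩, rfl⟩
    obtain ⟨t, ht, q1, hq1, hq1e⟩ := hTg (g i) ⟨i, rfl⟩
    obtain ⟨s, hs, q2, hq2, hq2e⟩ := hTh (h j) ⟨j, rfl⟩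
    refine ⟨t + s, Finset.mem_image₂_of_mem ht hs, q1 + q2, Q.add_mem hq1 hq2, ?_⟩
    show t + s + (q1 + q2) = g i + h j
    rw [← hq1e, ← hq2e]; abel
  · -- finite fibers
    intro γ
    refine Set.Finite.subset (Set.Finite.biUnion (hA γ)
      (fun a _ => (hgfib a).prod (hhfib (γ - a)))) ?_
    rintro ⟨i, j⟩ (hp : g i + h j = γ)
    have hle : leQ (Q : Set Γ) (g i + h j) γ := ⟨0, Q.zero_mem, by rw [add_zero, hp]⟩
    obtain ⟨h1, _⟩ := key γ i j hle
    refine Set.mem_biUnion h1 ⟨rfl, ?_⟩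
    show h j = γ - g i
    rw [← hp]; abel
end
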